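/- arXiv:2002.11546 — 2 statements merged into one kernel-verified Lean document; each statement's English description precedes it below -/
import Mathlib

section
/- Let n be a positive natural number, let h : ℝⁿ → ℝ be a convex function that is positively 1-homogeneous (that is, h(c·x) = c·h(x) for every c > 0 and every x ∈ ℝⁿ), let μ > 0, and let z, x⋆ ∈ ℝⁿ. Then x⋆ is a minimizer over ℝⁿ of the function x ↦ (1/2)‖x − μ·z‖² + h(x) if and only if (1/μ)·x⋆ is a minimizer over ℝⁿ of the function u ↦ (1/2)‖u − z‖² + (1/μ)·h(u). (Consequently, for a 1-homogeneous regularizer h, the scaled denoiser D_μ(z) := (1/μ)·prox_h(μ·z) equals prox_{μ⁻¹ h}(z), so denoiser scaling is equivalent to tuning the regularization parameter in front of h.) -/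
/-!
Substituting `x = μ • u` turns the first objective into `μ ^ 2` times the second:
the quadratic term picks up `μ ^ 2` from `‖μ • u - μ • z‖ = μ * ‖u - z‖`, and by
1-homogeneity so does `h (μ • u) = μ ^ 2 * (μ⁻¹ * h u)`. A positive rescaling of the
objective composed with a bijective change of variables does not change minimizers.
-/

section

variable {E : Type*} [SeminormedAddCommGroup E] [NormedSpace ℝ E]

/-- The objective `x ↦ ½‖x - w‖² + f x` whose minimizer is `prox_f w`. -/
noncomputable def proxObjective (f : E → ℝ) (w x : E) : ℝ :=
  1 / 2 * ‖x - w‖ ^ 2 + f x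

theorem proxObjective_inv_smul {h : E → ℝ}
    (hhom : ∀ c : ℝ, 0 < c → ∀ x : E, h (c • x) = c * h x) {μ : ℝ} (hμ : 0 < μ) (z x : E) :
    proxObjective (fun u => μ⁻¹ * h u) z (μ⁻¹ • x) = μ⁻¹ ^ 2 * proxObjective h (μ • z) x := by
  have hsub : μ⁻¹ • x - z = μ⁻¹ • (x - μ • z) := by
    rw [smul_sub, inv_smul_smul₀ hμ.ne']
  simp only [proxObjective, hsub, norm_smul, hhom _ (inv_pos.2 hμ),
    Real.norm_of_nonneg (inv_nonneg.2 hμ.le)]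
  ring

end

theorem forall_le_iff_of_comp_eq_mul {α β : Type*} {f : α → ℝ} {g : β → ℝ} {e : α → β}
    (he : Function.Surjective e) {k : ℝ} (hk : 0 < k) (hgf : ∀ x, g (e x) = k * f x) (a : α) :
    (∀ x, f a ≤ f x) ↔ ∀ u, g (e a) ≤ g u := by
  rw [he.forall]
  simp only [hgf, mul_le_mul_iff_right₀ hk]

theorem scaled_denoiser_of_one_homogeneous_regularizer_general
    (n : ℕ)
    (h : EuclideanSpace ℝ (Fin n) → ℝ)
    (hhom : ∀ c : ℝ, 0 < c → ∀ x : EuclideanSpace ℝ (Fin n), h (c • x) = c * h x)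
    (μ : ℝ) (hμ : 0 < μ)
    (z xstar : EuclideanSpace ℝ (Fin n)) :
    (∀ x : EuclideanSpace ℝ (Fin n),
        (1 / 2) * ‖xstar - μ • z‖ ^ 2 + h xstar ≤ (1 / 2) * ‖x - μ • z‖ ^ 2 + h x)
    ↔
    (∀ u : EuclideanSpace ℝ (Fin n),
        (1 / 2) * ‖(1 / μ) • xstar - z‖ ^ 2 + (1 / μ) * h ((1 / μ) • xstar)
          ≤ (1 / 2) * ‖u - z‖ ^ 2 + (1 / μ) * h u) := by
  rw [one_div μ]
  exact forall_le_iff_of_comp_eq_mul (MulAction.surjective₀ (inv_ne_zero hμ.ne'))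
    (by positivity) (proxObjective_inv_smul hhom hμ z) xstar

/-- **1-homogeneous regularizers.**
For a convex, positively 1-homogeneous regularizer `h : ℝⁿ → ℝ`, `μ > 0`,
and `z, x⋆ ∈ ℝⁿ`, `x⋆` minimizes `x ↦ (1/2)‖x − μz‖² + h(x)` iff `(1/μ)·x⋆`
minimizes `u ↦ (1/2)‖u − z‖² + (1/μ)·h(u)`.  In other words the scaled
denoiser `D_μ(z) = (1/μ)·prox_h(μz)` equals `prox_{μ⁻¹·h}(z)`, so denoiser
scaling is equivalent to tuning the regularization parameter in front of `h`. -/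
theorem scaled_denoiser_of_one_homogeneous_regularizer
    (n : ℕ) (hn : 0 < n)
    (h : EuclideanSpace ℝ (Fin n) → ℝ)
    (hconv : ConvexOn ℝ Set.univ h)
    (hhom : ∀ c : ℝ, 0 < c → ∀ x : EuclideanSpace ℝ (Fin n), h (c • x) = c * h x)
    (μ : ℝ) (hμ : 0 < μ)
    (z xstar : EuclideanSpace ℝ (Fin n)) :
    (∀ x : EuclideanSpace ℝ (Fin n),
        (1 / 2) * ‖xstar - μ • z‖ ^ 2 + h xstar ≤ (1 / 2) * ‖x - μ • z‖ ^ 2 + h x)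
    ↔
    (∀ u : EuclideanSpace ℝ (Fin n),
        (1 / 2) * ‖(1 / μ) • xstar - z‖ ^ 2 + (1 / μ) * h ((1 / μ) • xstar)
          ≤ (1 / 2) * ‖u - z‖ ^ 2 + (1 / μ) * h u) :=
  scaled_denoiser_of_one_homogeneous_regularizer_general n h hhom μ hμ z xstar
end

section
/- Let n be a positive natural number, let g : ℝⁿ → ℝ be a convex differentiable function with gradient ∇g, let D : ℝⁿ → ℝⁿ be any map (a denoiser), let μ > 0 and γ > 0, and define the scaled denoiser D_μ(w) := (1/μ)·D(μ·w). Then x ∈ ℝⁿ is a fixed point of the PnP-ISTA update with the scaled denoiser, i.e. x = D_μ(x − γ·∇g(x)), if and only if there exists z ∈ ℝⁿ such that both (i) μ·x = D(μ·x − z) and (ii) μ·x is the (unique) minimizer over ℝⁿ of u ↦ (1/2)‖u − (μ·x + z)‖² + γ·μ²·g(u/μ); moreover in that case z = γ·μ·∇g(x). (This expresses the consensus-equilibrium characterization: the fixed points of PnP with the scaled denoiser satisfy μx = prox_{(γμ²)g(·/μ)}(μx + z) and μx = D(μx − z).) -/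
/-!
Put `p = μx` and `v = μx + z`. The objective in (ii) is `½‖u - v‖² + h u` with
`h u = γμ² g(u/μ)`, which is convex with gradient `γμ ∇g(x)` at `p`. A convex differentiable
function is minimal exactly where its gradient vanishes, so `p` minimizes the objective iff
`v - p = ∇h(p)`, i.e. iff `z = γμ ∇g(x)`. For this `z`, condition (i) is the fixed-point
equation multiplied by `μ`.
-/

open Set InnerProductSpace
open scoped RealInnerProductSpace

section Gradient

variable {F : Type*} [NormedAddCommGroup F] [InnerProductSpace ℝ F] [CompleteSpace F]
  {f f₂ : F → ℝ} {G G₂ p : F}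

theorem HasGradientAt.add (hf : HasGradientAt f G p) (hf₂ : HasGradientAt f₂ G₂ p) :
    HasGradientAt (fun u => f u + f₂ u) (G + G₂) p := by
  rw [hasGradientAt_iff_hasFDerivAt] at *
  rw [map_add]
  exact hf.add hf₂

theorem HasGradientAt.const_mul (hf : HasGradientAt f G p) (a : ℝ) :
    HasGradientAt (fun u => a * f u) (a • G) p := by
  rw [hasGradientAt_iff_hasFDerivAt] at *
  refine (hf.const_mul a).congr_fderiv ?_
  ext u
  simp

theorem HasGradientAt.comp_smul {c : ℝ} (hf : HasGradientAt f G (c • p)) :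
    HasGradientAt (fun u => f (c • u)) (c • G) p := by
  rw [hasGradientAt_iff_hasFDerivAt] at *
  refine (hf.comp p ((hasFDerivAt_id p).const_smul c)).congr_fderiv ?_
  ext u
  simp

theorem hasGradientAt_half_norm_sub_sq (v p : F) :
    HasGradientAt (fun u => 1 / 2 * ‖u - v‖ ^ 2) (p - v) p := by
  rw [hasGradientAt_iff_hasFDerivAt]
  refine ((((hasFDerivAt_id p).sub_const v).norm_sq).const_mul (1 / 2 : ℝ)).congr_fderiv ?_
  ext u
  simp

theorem IsLocalMin.hasGradientAt_eq_zero (h : IsLocalMin f p) (hf : HasGradientAt f G p) :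
    G = 0 :=
  (toDual ℝ F).map_eq_zero_iff.mp (h.hasFDerivAt_eq_zero (hasGradientAt_iff_hasFDerivAt.mp hf))

end Gradient

section Convex

variable {F : Type*} [NormedAddCommGroup F] [InnerProductSpace ℝ F] {f : F → ℝ} {G p : F}

theorem convexOn_univ_half_norm_sub_sq (v : F) :
    ConvexOn ℝ univ fun u : F => 1 / 2 * ‖u - v‖ ^ 2 := by
  have hsq := ((convexOn_univ_dist v).pow (fun u _ => dist_nonneg) 2).smul
    (by norm_num : (0 : ℝ) ≤ 1 / 2)
  simpa [dist_eq_norm] using hsq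

theorem ConvexOn.const_mul_comp_smul (hf : ConvexOn ℝ univ f) {a : ℝ} (ha : 0 ≤ a) (c : ℝ) :
    ConvexOn ℝ univ fun u => a * f (c • u) := by
  have hscaled := hf.comp_linearMap (c • LinearMap.id (R := ℝ) (M := F))
  exact hscaled.smul ha

variable [CompleteSpace F]

theorem ConvexOn.inner_gradient_le_sub (hf : ConvexOn ℝ univ f) (hG : HasGradientAt f G p)
    (u : F) : ⟪G, u - p⟫_ℝ ≤ f u - f p := by
  have hline : ConvexOn ℝ univ fun t : ℝ => f (AffineMap.lineMap p u t) :=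
    hf.comp_affineMap (AffineMap.lineMap p u)
  have hderiv : HasDerivAt (fun t : ℝ => f (AffineMap.lineMap p u t)) ⟪G, u - p⟫_ℝ 0 := by
    have hf' := hasGradientAt_iff_hasFDerivAt.mp hG
    rw [← AffineMap.lineMap_apply_zero (k := ℝ) p u] at hf'
    have h := hf'.comp_hasDerivAt (0 : ℝ)
      (AffineMap.hasDerivAt_lineMap (a := p) (b := u) (x := 0))
    rwa [toDual_apply_apply] at h
  simpa [slope_def_field] using
    hline.le_slope_of_hasDerivAt (mem_univ 0) (mem_univ 1) one_pos hderiv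

theorem ConvexOn.isMinOn_univ_iff_of_hasGradientAt (hf : ConvexOn ℝ univ f)
    (hG : HasGradientAt f G p) : IsMinOn f univ p ↔ G = 0 := by
  refine ⟨fun hmin => (hmin.isLocalMin Filter.univ_mem).hasGradientAt_eq_zero hG, ?_⟩
  rintro rfl
  refine isMinOn_univ_iff.mpr fun u => ?_
  simpa using hf.inner_gradient_le_sub hG u

theorem isMinOn_half_norm_sub_sq_add_iff {v : F} (hf : ConvexOn ℝ univ f)
    (hG : HasGradientAt f G p) :
    IsMinOn (fun u => 1 / 2 * ‖u - v‖ ^ 2 + f u) univ p ↔ v - p = G := by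
  change IsMinOn ((fun u => 1 / 2 * ‖u - v‖ ^ 2) + f) univ p ↔ _
  rw [((convexOn_univ_half_norm_sub_sq v).add hf).isMinOn_univ_iff_of_hasGradientAt
    ((hasGradientAt_half_norm_sub_sq v p).add hG)]
  rw [add_comm, add_eq_zero_iff_eq_neg, neg_sub, eq_comm]

end Convex

theorem pnp_ista_fixed_point_consensus_equilibrium_general
    (n : ℕ)
    (g : EuclideanSpace ℝ (Fin n) → ℝ)
    (g' : EuclideanSpace ℝ (Fin n) → EuclideanSpace ℝ (Fin n))
    (hconv : ConvexOn ℝ Set.univ g)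
    (hgrad : ∀ x, HasGradientAt g (g' x) x)
    (D : EuclideanSpace ℝ (Fin n) → EuclideanSpace ℝ (Fin n))
    (μ γ : ℝ) (hμ : 0 < μ) (hγ : 0 < γ)
    (Dμ : EuclideanSpace ℝ (Fin n) → EuclideanSpace ℝ (Fin n))
    (hDμ : ∀ w, Dμ w = (1 / μ) • D (μ • w))
    (x : EuclideanSpace ℝ (Fin n)) :
    (x = Dμ (x - γ • g' x)
      ↔ ∃ z : EuclideanSpace ℝ (Fin n),
          μ • x = D (μ • x - z) ∧
          (∀ u : EuclideanSpace ℝ (Fin n),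
            (1 / 2) * ‖μ • x - (μ • x + z)‖ ^ 2 + γ * μ ^ 2 * g ((1 / μ) • (μ • x))
              ≤ (1 / 2) * ‖u - (μ • x + z)‖ ^ 2 + γ * μ ^ 2 * g ((1 / μ) • u)))
    ∧
    (∀ z : EuclideanSpace ℝ (Fin n),
        (μ • x = D (μ • x - z) ∧
          (∀ u : EuclideanSpace ℝ (Fin n),
            (1 / 2) * ‖μ • x - (μ • x + z)‖ ^ 2 + γ * μ ^ 2 * g ((1 / μ) • (μ • x))
              ≤ (1 / 2) * ‖u - (μ • x + z)‖ ^ 2 + γ * μ ^ 2 * g ((1 / μ) • u)))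
        → z = (γ * μ) • g' x) := by
  have hfixed : x = Dμ (x - γ • g' x) ↔ μ • x = D (μ • x - (γ * μ) • g' x) := by
    rw [hDμ, one_div, eq_inv_smul_iff₀ hμ.ne', smul_sub, smul_smul, mul_comm μ γ]
  have hgrad_scaled : HasGradientAt (fun u => γ * μ ^ 2 * g ((1 / μ) • u))
      ((γ * μ) • g' x) (μ • x) := by
    have hx : (1 / μ) • (μ • x) = x := by rw [smul_smul, one_div_mul_cancel hμ.ne', one_smul]
    have hgx : HasGradientAt g (g' x) ((1 / μ) • (μ • x)) := by rw [hx]; exact hgrad x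
    convert hgx.comp_smul.const_mul (γ * μ ^ 2) using 1
    rw [smul_smul]
    field_simp
  have hprox : ∀ z, (∀ u,
      1 / 2 * ‖μ • x - (μ • x + z)‖ ^ 2 + γ * μ ^ 2 * g ((1 / μ) • (μ • x))
        ≤ 1 / 2 * ‖u - (μ • x + z)‖ ^ 2 + γ * μ ^ 2 * g ((1 / μ) • u))
      ↔ z = (γ * μ) • g' x := by
    intro z
    have hmin := isMinOn_half_norm_sub_sq_add_iff (v := μ • x + z)
      (hconv.const_mul_comp_smul (by positivity) (1 / μ)) hgrad_scaled
    rwa [isMinOn_univ_iff, add_sub_cancel_left] at hmin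
  refine ⟨hfixed.trans ⟨fun h => ⟨_, h, (hprox _).mpr rfl⟩, ?_⟩,
    fun z h => (hprox z).mp h.2⟩
  rintro ⟨z, hD, hmin⟩
  rwa [← (hprox z).mp hmin]

/-- **Proposition 3 (consensus-equilibrium interpretation).**
Let `g : ℝⁿ → ℝ` be convex and differentiable with gradient `g'`, let
`D : ℝⁿ → ℝⁿ` be any denoiser, `μ, γ > 0`, and let
`D_μ(w) := (1/μ)·D(μw)` be the scaled denoiser.  Then `x` is a fixed point of
the PnP-ISTA update with the scaled denoiser, `x = D_μ(x − γ∇g(x))`, iff there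
exists `z` such that (i) `μx = D(μx − z)` and (ii) `μx` minimizes
`u ↦ (1/2)‖u − (μx + z)‖² + γμ²·g(u/μ)` (i.e. `μx = prox_{(γμ²)g(·/μ)}(μx + z)`);
moreover any such `z` equals `γμ∇g(x)`. -/
theorem pnp_ista_fixed_point_consensus_equilibrium
    (n : ℕ) (hn : 0 < n)
    (g : EuclideanSpace ℝ (Fin n) → ℝ)
    (g' : EuclideanSpace ℝ (Fin n) → EuclideanSpace ℝ (Fin n))
    (hconv : ConvexOn ℝ Set.univ g)
    (hgrad : ∀ x, HasGradientAt g (g' x) x)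
    (D : EuclideanSpace ℝ (Fin n) → EuclideanSpace ℝ (Fin n))
    (μ γ : ℝ) (hμ : 0 < μ) (hγ : 0 < γ)
    (Dμ : EuclideanSpace ℝ (Fin n) → EuclideanSpace ℝ (Fin n))
    (hDμ : ∀ w, Dμ w = (1 / μ) • D (μ • w))
    (x : EuclideanSpace ℝ (Fin n)) :
    (x = Dμ (x - γ • g' x)
      ↔ ∃ z : EuclideanSpace ℝ (Fin n),
          μ • x = D (μ • x - z) ∧
          (∀ u : EuclideanSpace ℝ (Fin n),
            (1 / 2) * ‖μ • x - (μ • x + z)‖ ^ 2 + γ * μ ^ 2 * g ((1 / μ) • (μ • x))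
              ≤ (1 / 2) * ‖u - (μ • x + z)‖ ^ 2 + γ * μ ^ 2 * g ((1 / μ) • u)))
    ∧
    (∀ z : EuclideanSpace ℝ (Fin n),
        (μ • x = D (μ • x - z) ∧
          (∀ u : EuclideanSpace ℝ (Fin n),
            (1 / 2) * ‖μ • x - (μ • x + z)‖ ^ 2 + γ * μ ^ 2 * g ((1 / μ) • (μ • x))
              ≤ (1 / 2) * ‖u - (μ • x + z)‖ ^ 2 + γ * μ ^ 2 * g ((1 / μ) • u)))
        → z = (γ * μ) • g' x) :=
  pnp_ista_fixed_point_consensus_equilibrium_general n g g' hconv hgrad D μ γ hμ hγ Dμ hDμ x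
end
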